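/- arXiv:0809.0289 — 5 statements merged into one kernel-verified Lean document; each statement's English description precedes it below -/
import Mathlib

section
/- Every finite-dimensional right S_n-module is isomorphic to a direct sum of uniserial modules. -/
/-!
Write `f` and `g` for the actions of `t` and `g` on `M`: `f` is nilpotent, `g` is an involution
and `g f = -f g`. For nilpotent `f`, the `f`-invariant subspaces of a cyclic subspace
`span {m, f m, f² m, …}` form a chain, so an `S_n`-submodule that is `f`-cyclic is uniserial; it
suffices to split `M` into `f`-cyclic subspaces generated by eigenvectors of `g`, which are
`S_n`-submodules.
If `f ^ (h + 1) = 0` and `f ^ h ≠ 0`, then since `2` is invertible there is a `g`-eigenvector `m`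
with `f ^ h m ≠ 0`, and a functional `ψ` with `ψ (f ^ h m) ≠ 0` and `ψ ∘ g = ± ψ`. The largest
`f`-invariant subspace of `ker ψ` is a complement of `span {f ^ j m}` (every nonzero invariant
subspace of the cyclic subspace contains `f ^ h m`), and it is also `g`-invariant; induction on
the dimension finishes the proof.
-/

noncomputable section

def tF (k : Type) [Field k] : FreeAlgebra k (Fin 2) := FreeAlgebra.ι k 0

def gF (k : Type) [Field k] : FreeAlgebra k (Fin 2) := FreeAlgebra.ι k 1

inductive SRel (k : Type) [Field k] (n : ℕ) :
    FreeAlgebra k (Fin 2) → FreeAlgebra k (Fin 2) → Prop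
  | tpow : SRel k n (tF k ^ n) 0
  | gsq  : SRel k n (gF k * gF k) 1
  | anti : SRel k n (gF k * tF k + tF k * gF k) 0

/-- The algebra `S_n = k[T]/(T^n) ⋊ C₂`. -/
abbrev Sn (k : Type) [Field k] (n : ℕ) := RingQuot (SRel k n)

/-- A module is uniserial if its submodules are totally ordered by inclusion. -/
def IsUniserialMod (R M : Type) [Ring R] [AddCommGroup M] [Module R M] : Prop :=
  ∀ W₁ W₂ : Submodule R M, W₁ ≤ W₂ ∨ W₂ ≤ W₁

open Module

section CyclicSpan

variable {R M : Type*} [Semiring R] [AddCommMonoid M] [Module R M]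

def cyclicSpan (f : End R M) (m : M) : Submodule R M :=
  Submodule.span R (Set.range fun j : ℕ => (f ^ j) m)

variable {f : End R M} {m : M} {W : Submodule R M}

lemma pow_apply_apply_eq_zero {d : ℕ} (hd : (f ^ d) m = 0) : (f ^ d) (f m) = 0 := by
  rw [← Module.End.mul_apply, ← pow_succ, pow_succ', Module.End.mul_apply, hd, map_zero]

lemma pow_apply_mem_cyclicSpan (j : ℕ) : (f ^ j) m ∈ cyclicSpan f m :=
  Submodule.subset_span ⟨j, rfl⟩

lemma mem_cyclicSpan_self : m ∈ cyclicSpan f m := by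
  simpa using pow_apply_mem_cyclicSpan (f := f) (m := m) 0

lemma cyclicSpan_zero : cyclicSpan f 0 = ⊥ := by
  simp [cyclicSpan]

lemma map_cyclicSpan {M₂ : Type*} [AddCommMonoid M₂] [Module R M₂] {f₂ : End R M₂}
    (φ : M →ₗ[R] M₂) (h : f₂ ∘ₗ φ = φ ∘ₗ f) (m : M) :
    (cyclicSpan f m).map φ = cyclicSpan f₂ (φ m) := by
  rw [cyclicSpan, cyclicSpan, Submodule.map_span, ← Set.range_comp]
  congr 2
  ext j
  exact (LinearMap.congr_fun (Module.End.commute_pow_left_of_commute h j) m).symm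

lemma cyclicSpan_mem_invtSubmodule : cyclicSpan f m ∈ f.invtSubmodule := by
  rw [Module.End.mem_invtSubmodule_iff_map_le, map_cyclicSpan f rfl, cyclicSpan,
    Submodule.span_le]
  rintro _ ⟨j, rfl⟩
  simpa [← Module.End.mul_apply, ← pow_succ] using
    pow_apply_mem_cyclicSpan (f := f) (m := m) (j + 1)

lemma cyclicSpan_le_iff (hW : W ∈ f.invtSubmodule) : cyclicSpan f m ≤ W ↔ m ∈ W := by
  refine ⟨fun h => h mem_cyclicSpan_self, fun hm => Submodule.span_le.2 ?_⟩
  rintro _ ⟨j, rfl⟩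
  exact Module.End.pow_apply_mem_of_forall_mem j hW m hm

lemma cyclicSpan_eq_span_sup : cyclicSpan f m = R ∙ m ⊔ cyclicSpan f (f m) := by
  refine le_antisymm (Submodule.span_le.2 ?_) (sup_le ?_ ?_)
  · rintro _ ⟨_ | j, rfl⟩
    · exact Submodule.mem_sup_left (by simp)
    · simp only [SetLike.mem_coe, pow_succ, Module.End.mul_apply]
      exact Submodule.mem_sup_right (pow_apply_mem_cyclicSpan j)
  · exact (Submodule.span_singleton_le_iff_mem _ _).2 mem_cyclicSpan_self
  · exact (cyclicSpan_le_iff cyclicSpan_mem_invtSubmodule).2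
      (cyclicSpan_mem_invtSubmodule mem_cyclicSpan_self)

end CyclicSpan

section Nilpotent

variable {K V : Type*} [DivisionRing K] [AddCommGroup V] [Module K V]
  {f : End K V} {m : V} {d : ℕ} {W : Submodule K V}

lemma cyclicSpan_le_of_mem_sup (hd : (f ^ d) m = 0) (hW : W ∈ f.invtSubmodule)
    (hm : m ∈ W ⊔ cyclicSpan f (f m)) : cyclicSpan f m ≤ W := by
  induction d generalizing m with
  | zero => simp_all [cyclicSpan_zero]
  | succ d ih =>
    have hfm : f m ∈ W ⊔ cyclicSpan f (f (f m)) := by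
      have := Submodule.mem_map_of_mem (f := f) hm
      rw [Submodule.map_sup, map_cyclicSpan f rfl] at this
      exact sup_le_sup_right ((Module.End.mem_invtSubmodule_iff_map_le f).1 hW) _ this
    have hle : cyclicSpan f (f m) ≤ W := ih (by rwa [pow_succ, Module.End.mul_apply] at hd) hfm
    rwa [cyclicSpan_le_iff hW, ← sup_eq_left.2 hle]

lemma cyclicSpan_le_of_not_le (hd : (f ^ d) m = 0) (hW : W ∈ f.invtSubmodule)
    (hWm : W ≤ cyclicSpan f m) (hWfm : ¬ W ≤ cyclicSpan f (f m)) : cyclicSpan f m ≤ W := by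
  obtain ⟨x, hxW, hx⟩ := Set.not_subset.1 hWfm
  have hx' : x ∈ K ∙ m ⊔ cyclicSpan f (f m) := cyclicSpan_eq_span_sup (f := f) ▸ hWm hxW
  obtain ⟨y, hy, z, hz, rfl⟩ := Submodule.mem_sup.1 hx'
  obtain ⟨c, rfl⟩ := Submodule.mem_span_singleton.1 hy
  have hc : c ≠ 0 := by rintro rfl; simp_all
  refine cyclicSpan_le_of_mem_sup hd hW ?_
  have hm := Submodule.add_mem_sup (W.smul_mem c⁻¹ hxW) (neg_mem (Submodule.smul_mem _ c⁻¹ hz))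
  rwa [smul_add, smul_smul, inv_mul_cancel₀ hc, one_smul, add_neg_cancel_right] at hm

lemma le_total_of_le_cyclicSpan (hd : (f ^ d) m = 0) {W₁ W₂ : Submodule K V}
    (hW₁ : W₁ ∈ f.invtSubmodule) (hW₂ : W₂ ∈ f.invtSubmodule)
    (h₁ : W₁ ≤ cyclicSpan f m) (h₂ : W₂ ≤ cyclicSpan f m) : W₁ ≤ W₂ ∨ W₂ ≤ W₁ := by
  induction d generalizing m with
  | zero => simp_all [cyclicSpan_zero]
  | succ d ih =>
    by_cases hW₁' : W₁ ≤ cyclicSpan f (f m)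
    · by_cases hW₂' : W₂ ≤ cyclicSpan f (f m)
      · exact ih (by rwa [pow_succ, Module.End.mul_apply] at hd) hW₁' hW₂'
      · exact Or.inl (h₁.trans (cyclicSpan_le_of_not_le hd hW₂ h₂ hW₂'))
    · exact Or.inr (h₂.trans (cyclicSpan_le_of_not_le hd hW₁ h₁ hW₁'))

lemma pow_apply_mem_of_le_cyclicSpan {h : ℕ} (hh : (f ^ (h + 1)) m = 0)
    (hW : W ∈ f.invtSubmodule) (hWm : W ≤ cyclicSpan f m) (hW₀ : W ≠ ⊥) : (f ^ h) m ∈ W := by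
  have hline : cyclicSpan f ((f ^ h) m) = K ∙ (f ^ h) m := by
    rw [cyclicSpan_eq_span_sup, ← Module.End.mul_apply, ← pow_succ', hh, cyclicSpan_zero,
      sup_bot_eq]
  have hsocle : cyclicSpan f ((f ^ h) m) ≤ cyclicSpan f m :=
    (cyclicSpan_le_iff cyclicSpan_mem_invtSubmodule).2 (pow_apply_mem_cyclicSpan h)
  rcases le_total_of_le_cyclicSpan hh hW cyclicSpan_mem_invtSubmodule hWm hsocle with hle | hle
  · obtain ⟨x, hxW, hx₀⟩ := Submodule.exists_mem_ne_zero_of_ne_bot hW₀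
    obtain ⟨c, rfl⟩ := Submodule.mem_span_singleton.1 (hline ▸ hle hxW)
    have hc : c ≠ 0 := by rintro rfl; simp at hx₀
    simpa [smul_smul, inv_mul_cancel₀ hc] using W.smul_mem c⁻¹ hxW
  · exact hle mem_cyclicSpan_self

lemma lt_finrank_cyclicSpan [FiniteDimensional K V] (hd : (f ^ d) m = 0) {j : ℕ}
    (hj : (f ^ j) m ≠ 0) : j < finrank K (cyclicSpan f m) := by
  induction j generalizing m with
  | zero =>
    refine Submodule.one_le_finrank_iff.2 ((Submodule.ne_bot_iff _).2 ?_)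
    exact ⟨m, mem_cyclicSpan_self, by simpa using hj⟩
  | succ j ih =>
    rw [pow_succ, Module.End.mul_apply] at hj
    have hm : m ∉ cyclicSpan f (f m) := fun hm => by
      have : m ∈ (⊥ : Submodule K V) := cyclicSpan_le_of_mem_sup hd
        (Module.End.invtSubmodule.bot_mem f) (by simpa using hm) mem_cyclicSpan_self
      simp_all
    have hlt : cyclicSpan f (f m) < cyclicSpan f m :=
      lt_of_le_of_ne ((cyclicSpan_le_iff cyclicSpan_mem_invtSubmodule).2
        (cyclicSpan_mem_invtSubmodule mem_cyclicSpan_self)) fun h => hm (h ▸ mem_cyclicSpan_self)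
    exact lt_of_le_of_lt (ih (pow_apply_apply_eq_zero hd) hj)
      (Submodule.finrank_lt_finrank_of_lt hlt)

end Nilpotent

section InvtCore

variable {R M : Type*} [Semiring R] [AddCommMonoid M] [Module R M]
  {f : End R M} {p W : Submodule R M}

def invtCore (f : End R M) (p : Submodule R M) : Submodule R M :=
  ⨅ j : ℕ, p.comap (f ^ j)

lemma mem_invtCore {x : M} : x ∈ invtCore f p ↔ ∀ j : ℕ, (f ^ j) x ∈ p := by
  simp [invtCore]

lemma invtCore_le : invtCore f p ≤ p := fun x hx => by
  simpa using mem_invtCore.1 hx 0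

lemma invtCore_mem_invtSubmodule : invtCore f p ∈ f.invtSubmodule := fun x hx =>
  mem_invtCore.2 fun j => by
    simpa [← Module.End.mul_apply, ← pow_succ] using mem_invtCore.1 hx (j + 1)

lemma le_invtCore (hW : W ∈ f.invtSubmodule) (hWp : W ≤ p) : W ≤ invtCore f p := fun x hx =>
  mem_invtCore.2 fun j => hWp (Module.End.pow_apply_mem_of_forall_mem j hW x hx)

end InvtCore

section Complement

variable {K V : Type*} [Field K] [AddCommGroup V] [Module K V] [FiniteDimensional K V]
  {f : End K V} {h : ℕ}

lemma finrank_le_finrank_invtCore_ker_add (hfh : f ^ h = 0) (ψ : Dual K V) :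
    finrank K V ≤ finrank K (invtCore f (LinearMap.ker ψ)) + h := by
  let Φ : V →ₗ[K] Fin h → K := LinearMap.pi fun j => ψ ∘ₗ f ^ (j : ℕ)
  have hker : LinearMap.ker Φ ≤ invtCore f (LinearMap.ker ψ) := fun v hv =>
    mem_invtCore.2 fun j => by
      rcases lt_or_ge j h with hj | hj
      · exact congr_fun hv ⟨j, hj⟩
      · simp [pow_eq_zero_of_le hj hfh]
  have hrange := (LinearMap.range Φ).finrank_le
  rw [Module.finrank_fin_fun] at hrange
  have := LinearMap.finrank_range_add_finrank_ker Φ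
  have := Submodule.finrank_mono hker
  omega

lemma isCompl_cyclicSpan_invtCore_ker (hfh : f ^ (h + 1) = 0) {m : V} {ψ : Dual K V}
    (hψ : ψ ((f ^ h) m) ≠ 0) : IsCompl (cyclicSpan f m) (invtCore f (LinearMap.ker ψ)) := by
  have hm : (f ^ h) m ≠ 0 := fun h₀ => hψ (by rw [h₀, map_zero])
  have hd : (f ^ (h + 1)) m = 0 := by rw [hfh, LinearMap.zero_apply]
  refine (Submodule.isCompl_iff_disjoint _ _ ?_).2 (disjoint_iff.2 ?_)
  · have := lt_finrank_cyclicSpan hd hm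
    have := finrank_le_finrank_invtCore_ker_add hfh ψ
    omega
  · by_contra hne
    have := pow_apply_mem_of_le_cyclicSpan hd
      (Module.End.invtSubmodule.inf_mem cyclicSpan_mem_invtSubmodule invtCore_mem_invtSubmodule)
      inf_le_left hne
    exact hψ (invtCore_le (Submodule.mem_inf.1 this).2)

end Complement

section Anticommuting

variable {K V : Type*} [Field K] [AddCommGroup V] [Module K V] {f g : End K V}

lemma exists_apply_eq_smul_of_apply_ne_zero (h2 : (2 : K) ≠ 0) (hg : g * g = 1)
    {W : Type*} [AddCommGroup W] [Module K W] (T : V →ₗ[K] W) {m₀ : V} (hm₀ : T m₀ ≠ 0) :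
    ∃ (m : V) (ε : K), g m = ε • m ∧ T m ≠ 0 := by
  have hgg : ∀ v, g (g v) = v := fun v => by rw [← Module.End.mul_apply, hg, Module.End.one_apply]
  by_contra! H
  have hadd := H (m₀ + g m₀) 1 (by simp [hgg, add_comm])
  have hsub := H (m₀ - g m₀) (-1) (by simp [hgg])
  apply hm₀
  have : (2 : K) • T m₀ = 0 := by
    rw [two_smul, ← sub_add_cancel (T m₀) (T (g m₀))]
    simpa [map_add, map_sub, add_add_sub_cancel, add_comm] using congrArg₂ (· + ·) hsub hadd
  exact (smul_eq_zero.1 this).resolve_left h2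

lemma exists_dual_comp_eq_smul (h2 : (2 : K) ≠ 0) (hg : g * g = 1) {w : V} (hw : w ≠ 0)
    {δ : K} (hgw : g w = δ • w) : ∃ ψ : Dual K V, ψ w ≠ 0 ∧ ψ ∘ₗ g = δ • ψ := by
  have hgg : ∀ v, g (g v) = v := fun v => by rw [← Module.End.mul_apply, hg, Module.End.one_apply]
  have hδ : δ * δ = 1 := smul_left_injective K hw <| by
    simpa [hgw, smul_smul] using hgg w
  obtain ⟨φ, hφ⟩ : ∃ φ : Dual K V, φ w ≠ 0 := by
    by_contra! H
    exact hw ((Module.forall_dual_apply_eq_zero_iff K w).1 H)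
  refine ⟨φ + δ • φ ∘ₗ g, ?_, ?_⟩
  · simpa [hgw, ← mul_assoc, hδ, ← two_mul] using mul_ne_zero h2 hφ
  · ext v
    simp only [LinearMap.comp_apply, LinearMap.add_apply, LinearMap.smul_apply, hgg, smul_eq_mul]
    linear_combination (-φ (g v)) * hδ

lemma exists_apply_pow_eq_smul (hgf : g * f = -f * g) {m : V} {ε : K} (hgm : g m = ε • m)
    (j : ℕ) : ∃ δ : K, g ((f ^ j) m) = δ • (f ^ j) m := by
  induction j with
  | zero => exact ⟨ε, by simpa using hgm⟩
  | succ j ih =>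
    obtain ⟨δ, hδ⟩ := ih
    refine ⟨-δ, ?_⟩
    rw [pow_succ', Module.End.mul_apply, ← Module.End.mul_apply g, hgf, neg_mul,
      LinearMap.neg_apply, Module.End.mul_apply, hδ, map_smul, neg_smul]

lemma cyclicSpan_mem_invtSubmodule_of_anticomm (hgf : g * f = -f * g) {m : V} {ε : K}
    (hgm : g m = ε • m) : cyclicSpan f m ∈ g.invtSubmodule := by
  rw [Module.End.mem_invtSubmodule_iff_map_le, cyclicSpan, Submodule.map_span, Submodule.span_le]
  rintro _ ⟨_, ⟨j, rfl⟩, rfl⟩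
  obtain ⟨δ, hδ⟩ := exists_apply_pow_eq_smul hgf hgm j
  rw [SetLike.mem_coe, hδ]
  exact Submodule.smul_mem _ δ (pow_apply_mem_cyclicSpan j)

lemma map_mem_invtSubmodule_of_anticomm (hgf : g * f = -f * g) {W : Submodule K V}
    (hW : W ∈ f.invtSubmodule) : W.map g ∈ f.invtSubmodule := by
  rintro _ ⟨w, hw, rfl⟩
  refine ⟨-f w, neg_mem (hW hw), ?_⟩
  rw [map_neg, ← Module.End.mul_apply, hgf, neg_mul, LinearMap.neg_apply, neg_neg,
    Module.End.mul_apply]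

lemma invtCore_ker_mem_invtSubmodule (hgf : g * f = -f * g) {ψ : Dual K V} {δ : K}
    (hψg : ψ ∘ₗ g = δ • ψ) : invtCore f (LinearMap.ker ψ) ∈ g.invtSubmodule := by
  rw [Module.End.mem_invtSubmodule_iff_map_le]
  refine le_invtCore (map_mem_invtSubmodule_of_anticomm hgf invtCore_mem_invtSubmodule) ?_
  rintro _ ⟨u, hu, rfl⟩
  have hψu : ψ (g u) = δ * ψ u := LinearMap.congr_fun hψg u
  rw [LinearMap.mem_ker, hψu, invtCore_le hu, mul_zero]

lemma exists_isCompl_cyclicSpan (h2 : (2 : K) ≠ 0) [FiniteDimensional K V] (hg : g * g = 1)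
    (hgf : g * f = -f * g) {h : ℕ} (hfh : f ^ (h + 1) = 0) {m : V} {ε : K} (hgm : g m = ε • m)
    (hm : (f ^ h) m ≠ 0) :
    ∃ U : Submodule K V,
      IsCompl (cyclicSpan f m) U ∧ U ∈ f.invtSubmodule ∧ U ∈ g.invtSubmodule := by
  obtain ⟨δ, hδ⟩ := exists_apply_pow_eq_smul hgf hgm h
  obtain ⟨ψ, hψ, hψg⟩ := exists_dual_comp_eq_smul h2 hg hm hδ
  exact ⟨_, isCompl_cyclicSpan_invtCore_ker hfh hψ, invtCore_mem_invtSubmodule,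
    invtCore_ker_mem_invtSubmodule hgf hψg⟩

end Anticommuting

section Decomposition

variable {K V : Type*} [Field K] [AddCommGroup V] [Module K V]

lemma cyclicSpan_coe {f : End K V} {U : Submodule K V} (hU : U ∈ f.invtSubmodule) (u : U) :
    cyclicSpan f (u : V) = (cyclicSpan (f.restrict hU) u).map U.subtype :=
  (map_cyclicSpan U.subtype rfl u).symm

lemma supIndep_map_subtype_cyclicSpan {f : End K V} {U : Submodule K V}
    (hU : U ∈ f.invtSubmodule) {s : Finset U} (hs : s.SupIndep (cyclicSpan (f.restrict hU))) :
    (s.map (Function.Embedding.subtype (· ∈ U))).SupIndep (cyclicSpan f) := by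
  rw [Finset.supIndep_map, ← iSupIndep_comp_coe_iff_supIndep]
  rw [← iSupIndep_comp_coe_iff_supIndep] at hs
  simpa only [Function.comp_def, Function.Embedding.coe_subtype, cyclicSpan_coe hU] using
    LinearMap.iSupIndep_map U.subtype U.injective_subtype hs

lemma sup_map_subtype_cyclicSpan {f : End K V} {U : Submodule K V}
    (hU : U ∈ f.invtSubmodule) (s : Finset U) :
    (s.map (Function.Embedding.subtype (· ∈ U))).sup (cyclicSpan f) =
      (s.sup (cyclicSpan (f.restrict hU))).map U.subtype := by
  rw [Finset.sup_map]
  simp only [Finset.sup_eq_iSup, Submodule.map_iSup, Function.comp_apply,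
    Function.Embedding.coe_subtype, cyclicSpan_coe hU]

theorem exists_finset_cyclicSpan_decomposition (h2 : (2 : K) ≠ 0) [FiniteDimensional K V]
    {f g : End K V} (hf : IsNilpotent f) (hg : g * g = 1) (hgf : g * f = -f * g) :
    ∃ s : Finset V, s.SupIndep (cyclicSpan f) ∧ s.sup (cyclicSpan f) = ⊤ ∧
      ∀ m ∈ s, ∃ ε : K, g m = ε • m := by
  classical
  induction hd : finrank K V using Nat.strong_induction_on generalizing V with
  | _ d ih =>
    rcases subsingleton_or_nontrivial V with hV | hV
    · exact ⟨∅, Finset.supIndep_empty _, Subsingleton.elim _ _, by simp⟩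
    obtain ⟨h, hh⟩ : ∃ h, nilpotencyClass f = h + 1 :=
      Nat.exists_eq_succ_of_ne_zero (pos_nilpotencyClass_iff.2 hf).ne'
    have hfh : f ^ (h + 1) = 0 := hh ▸ pow_nilpotencyClass hf
    obtain ⟨m₀, hm₀⟩ : ∃ m₀, (f ^ h) m₀ ≠ 0 := by
      by_contra! H
      exact pow_pred_nilpotencyClass hf (by simpa [hh] using LinearMap.ext H)
    obtain ⟨m, ε, hgm, hm⟩ := exists_apply_eq_smul_of_apply_ne_zero h2 hg (f ^ h) hm₀
    obtain ⟨U, hcompl, hfU, hgU⟩ := exists_isCompl_cyclicSpan h2 hg hgf hfh hgm hm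
    have hlt : finrank K U < d := by
      have := Submodule.finrank_add_eq_of_isCompl hcompl
      have hm' : m ≠ 0 := by rintro rfl; simp at hm
      have := lt_finrank_cyclicSpan (m := m) (j := 0) (by rw [hfh, LinearMap.zero_apply])
        (by simpa using hm')
      omega
    obtain ⟨s, hs, hsup, heig⟩ := ih _ hlt (Module.End.isNilpotent.restrict hfU hf)
      (f := f.restrict hfU) (g := g.restrict hgU)
      (LinearMap.ext fun u => Subtype.ext <| LinearMap.congr_fun hg u)
      (LinearMap.ext fun u => Subtype.ext <| LinearMap.congr_fun hgf u) rfl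
    have hsupU : (s.map (Function.Embedding.subtype (· ∈ U))).sup (cyclicSpan f) = U := by
      rw [sup_map_subtype_cyclicSpan hfU, hsup, Submodule.map_top, Submodule.range_subtype]
    refine ⟨insert m (s.map (Function.Embedding.subtype (· ∈ U))), ?_, ?_, ?_⟩
    · exact (supIndep_map_subtype_cyclicSpan hfU hs).insert (by rw [hsupU]; exact hcompl.disjoint)
    · rw [Finset.sup_insert, hsupU, hcompl.sup_eq_top]
    · simp only [Finset.mem_insert, Finset.mem_map, Function.Embedding.coe_subtype]
      rintro _ (rfl | ⟨u, hu, rfl⟩)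
      · exact ⟨ε, hgm⟩
      · obtain ⟨δ, hδ⟩ := heig u hu
        exact ⟨δ, congrArg Subtype.val hδ⟩

end Decomposition

section Algebra

variable {K A M : Type} [Field K] [Ring A] [Algebra K A] [AddCommGroup M] [Module K M]
  [Module A M] [IsScalarTower K A M]

lemma exists_restrictScalars_eq_of_adjoin_eq_top {s : Set A} (hs : Algebra.adjoin K s = ⊤)
    {p : Submodule K M} (hp : ∀ a ∈ s, p ∈ (Algebra.lsmul K K M a).invtSubmodule) :
    ∃ P : Submodule A M, P.restrictScalars K = p := by
  refine ⟨{ p with smul_mem' := fun a x hx => ?_ }, rfl⟩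
  have ha : a ∈ Algebra.adjoin K s := hs ▸ Algebra.mem_top
  induction ha using Algebra.adjoin_induction generalizing x with
  | mem a ha => exact hp a ha hx
  | algebraMap r => rw [algebraMap_smul]; exact p.smul_mem r hx
  | add a b _ _ ha hb => rw [add_smul]; exact p.add_mem (ha x hx) (hb x hx)
  | mul a b _ _ ha hb => rw [mul_smul]; exact ha _ (hb x hx)

lemma isUniserialMod_of_restrictScalars_eq_cyclicSpan {t : A} (ht : IsNilpotent t)
    {P : Submodule A M} {m : M} (hP : P.restrictScalars K = cyclicSpan (Algebra.lsmul K K M t) m) :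
    IsUniserialMod A P := by
  intro W₁ W₂
  obtain ⟨d, hd⟩ := ht
  have hm : (Algebra.lsmul K K M t ^ d) m = 0 := by
    rw [← map_pow, hd, map_zero, LinearMap.zero_apply]
  have key : ∀ W : Submodule A P,
      (W.map P.subtype).restrictScalars K ∈ (Algebra.lsmul K K M t).invtSubmodule ∧
        (W.map P.subtype).restrictScalars K ≤ cyclicSpan (Algebra.lsmul K K M t) m :=
    fun W => ⟨fun x hx => (W.map P.subtype).smul_mem t hx,
      hP ▸ Submodule.restrictScalars_mono K (Submodule.map_subtype_le P W)⟩
  simpa only [Submodule.restrictScalars_le,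
    Submodule.map_le_map_iff_of_injective P.injective_subtype] using
    le_total_of_le_cyclicSpan hm (key W₁).1 (key W₂).1 (key W₁).2 (key W₂).2

theorem exists_isInternal_isUniserialMod (h2 : (2 : K) ≠ 0) [FiniteDimensional K M] {t g : A}
    (ht : IsNilpotent t) (hg : g * g = 1) (hgt : g * t + t * g = 0)
    (hA : Algebra.adjoin K {t, g} = ⊤) :
    ∃ (ι : Type) (_ : Fintype ι) (_ : DecidableEq ι) (p : ι → Submodule A M),
      DirectSum.IsInternal p ∧ ∀ i, IsUniserialMod A (p i) := by
  classical
  let L : A →ₐ[K] End K M := Algebra.lsmul K K M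
  have hgtL : L g * L t = -L t * L g := by
    rw [neg_mul, eq_neg_iff_add_eq_zero, ← map_mul, ← map_mul, ← map_add, hgt, map_zero]
  obtain ⟨s, hs, hsup, heig⟩ := exists_finset_cyclicSpan_decomposition h2 (ht.map L)
    (by rw [← map_mul, hg, map_one]) hgtL
  have hP : ∀ m : s, ∃ P : Submodule A M, P.restrictScalars K = cyclicSpan (L t) m := by
    refine fun m => exists_restrictScalars_eq_of_adjoin_eq_top hA ?_
    rintro a (rfl | rfl)
    · exact cyclicSpan_mem_invtSubmodule
    · obtain ⟨ε, hε⟩ := heig m m.2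
      exact cyclicSpan_mem_invtSubmodule_of_anticomm hgtL hε
  choose P hP using hP
  refine ⟨s, inferInstance, inferInstance, P, ?_,
    fun m => isUniserialMod_of_restrictScalars_eq_cyclicSpan ht (hP m)⟩
  have : DirectSum.IsInternal fun m : s => (P m).restrictScalars K := by
    simp_rw [hP]
    refine DirectSum.isInternal_submodule_of_iSupIndep_of_iSup_eq_top hs.independent ?_
    rwa [Finset.sup_eq_iSup, iSup_subtype'] at hsup
  -- `DirectSum.IsInternal` only sees the underlying additive submonoids.
  exact this

end Algebra

namespace Sn

variable (k : Type) [Field k] (n : ℕ)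

def t : Sn k n := RingQuot.mkAlgHom k (SRel k n) (tF k)

def g : Sn k n := RingQuot.mkAlgHom k (SRel k n) (gF k)

lemma t_pow : t k n ^ n = 0 := by
  rw [t, ← map_pow, RingQuot.mkAlgHom_rel k SRel.tpow, map_zero]

lemma g_mul_g : g k n * g k n = 1 := by
  rw [g, ← map_mul, RingQuot.mkAlgHom_rel k SRel.gsq, map_one]

lemma g_mul_t_add_t_mul_g : g k n * t k n + t k n * g k n = 0 := by
  rw [t, g, ← map_mul, ← map_mul, ← map_add, RingQuot.mkAlgHom_rel k SRel.anti, map_zero]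

lemma adjoin_t_g : Algebra.adjoin k {t k n, g k n} = ⊤ := by
  have : {t k n, g k n} = RingQuot.mkAlgHom k (SRel k n) '' Set.range (FreeAlgebra.ι k) := by
    ext x
    simp [Fin.exists_fin_two, t, g, tF, gF, eq_comm]
  rw [this, Algebra.adjoin_image, FreeAlgebra.adjoin_range_ι, Algebra.map_top,
    (AlgHom.range_eq_top _).2 (RingQuot.mkAlgHom_surjective k _)]

open MulOpposite in
lemma adjoin_op_t_g : Algebra.adjoin k {op (t k n), op (g k n)} = ⊤ := by
  have : {op (t k n), op (g k n)} = unop ⁻¹' {t k n, g k n} := by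
    ext x
    simp [← unop_inj]
  rw [this, ← Subalgebra.op_adjoin, adjoin_t_g, Subalgebra.op_top]

end Sn

open MulOpposite in
theorem stmt3_general (k : Type) [Field k] (hk : ringChar k ≠ 2) (n : ℕ)
    (M : Type) [AddCommGroup M] [Module (Sn k n)ᵐᵒᵖ M]
    (hfd : @FiniteDimensional k (RestrictScalars k (Sn k n)ᵐᵒᵖ M) _ _
      (RestrictScalars.module k (Sn k n)ᵐᵒᵖ M)) :
    ∃ (ι : Type) (_ : Fintype ι) (_ : DecidableEq ι)
      (p : ι → Submodule (Sn k n)ᵐᵒᵖ M),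
      DirectSum.IsInternal p ∧ ∀ i, IsUniserialMod (Sn k n)ᵐᵒᵖ ↥(p i) := by
  -- the `k`-module structure of `RestrictScalars k (Sn k n)ᵐᵒᵖ M`, put on `M` itself
  let _ : Module k M := Module.compHom M (algebraMap k (Sn k n)ᵐᵒᵖ)
  have : IsScalarTower k (Sn k n)ᵐᵒᵖ M := IsScalarTower.of_algebraMap_smul fun _ _ => rfl
  have : FiniteDimensional k M := hfd
  exact exists_isInternal_isUniserialMod (Ring.two_ne_zero hk) (t := op (Sn.t k n))
    (g := op (Sn.g k n)) ⟨n, by rw [← op_pow, Sn.t_pow, op_zero]⟩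
    (by rw [← op_mul, Sn.g_mul_g, op_one])
    (by rw [← op_mul, ← op_mul, ← op_add, add_comm, Sn.g_mul_t_add_t_mul_g, op_zero])
    (Sn.adjoin_op_t_g k n)

/-- every finite-dimensional right `S_n`-module is (isomorphic to)
a direct sum of uniserial modules: it is the internal direct sum of a finite
family of uniserial submodules. -/
theorem stmt3 (k : Type) [Field k] (hk : ringChar k ≠ 2) (n : ℕ) (hn : 1 ≤ n)
    (M : Type) [AddCommGroup M] [Module (Sn k n)ᵐᵒᵖ M]
    (hfd : @FiniteDimensional k (RestrictScalars k (Sn k n)ᵐᵒᵖ M) _ _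
      (RestrictScalars.module k (Sn k n)ᵐᵒᵖ M)) :
    ∃ (ι : Type) (_ : Fintype ι) (_ : DecidableEq ι)
      (p : ι → Submodule (Sn k n)ᵐᵒᵖ M),
      DirectSum.IsInternal p ∧ ∀ i, IsUniserialMod (Sn k n)ᵐᵒᵖ ↥(p i) :=
  stmt3_general k hk n M hfd
end
end

section
/- Let n ≥ 1 and let I_0 be a subset of [n] with the property that every i ∈ I_0 \ Φ(I_0) satisfies 2i ≥ n+1; set J_0 := Φ(I_0). Then the number of nonempty initial segments K of I_0 satisfying K ≤ J_0 is equal to |I_0 ∩ J_0|. -/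
/-- The elements of a finite set of naturals, listed in decreasing order. -/
def descList (V : Finset ℕ) : List ℕ := (V.sort (· ≤ ·)).reverse

/-- The order `V ≤ W` on subsets of `[n]`: writing `V = {v_1 > … > v_x}` and
`W = {w_1 > … > w_y}` in decreasing order, `V ≤ W` iff `x ≤ y` and `v_l ≤ w_l`
for all `1 ≤ l ≤ x`. -/
def SetLE (V W : Finset ℕ) : Prop :=
  V.card ≤ W.card ∧ ∀ l < V.card, (descList V).getD l 0 ≤ (descList W).getD l 0

/-- `K` is a nonempty initial segment of `I` (the `u` smallest elements of `I`
for some `u ≥ 1`): `K` is a nonempty subset of `I` which is downward closed in `I`. -/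
def IsInitSeg (K I : Finset ℕ) : Prop :=
  K.Nonempty ∧ K ⊆ I ∧ ∀ i ∈ I, ∀ j ∈ K, i ≤ j → i ∈ K

/-- `Φ(I) = {n+1-i : i ∈ I}`. -/
def Phi (n : ℕ) (I : Finset ℕ) : Finset ℕ := I.image (fun i => n + 1 - i)

/-
Write `d₀ < d₁ < ⋯` for the elements of `I₀` and `P := I₀ ∩ Φ(I₀)`. Since `P` is `Φ`-stable,
its elements pair up as `p_l + p_{|P|-1-l} = n + 1`. The initial segment `{d₀, …, d_k}` is
`≤ Φ(I₀)` iff `d_l + d_{k-l} ≤ n + 1` for all `l ≤ k`, a condition that only gets stronger as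
`k` grows. It holds for `k < |P|` because `d_l ≤ p_l`. For `k = |P|` it fails: it bounds
`2 d_t ≤ n + 1` for `t = ⌊k/2⌋`, so by the hypothesis on `I₀ \ Φ(I₀)` the elements
`d₀, …, d_t` all lie in `P` and equal `p₀, …, p_t`, and then the pairing inside `P`
contradicts the middle inequality.
-/

open Finset

namespace Finset

variable {s t : Finset ℕ} {k l : ℕ}

theorem lt_card_toFinset_of_lt_card (hk : k < #s) :
    ∀ hf : (Set.ofPred (· ∈ s)).Finite, k < #hf.toFinset := fun hf => by
  rwa [show hf.toFinset = s from s.finite_toSet_toFinset]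

theorem nth_mem (hk : k < #s) : Nat.nth (· ∈ s) k ∈ s :=
  Nat.nth_mem k (lt_card_toFinset_of_lt_card hk)

theorem nth_lt_nth (hkl : k < l) (hl : l < #s) : Nat.nth (· ∈ s) k < Nat.nth (· ∈ s) l :=
  Nat.nth_lt_nth' hkl (lt_card_toFinset_of_lt_card hl)

theorem nth_le_nth (hkl : k ≤ l) (hl : l < #s) : Nat.nth (· ∈ s) k ≤ Nat.nth (· ∈ s) l :=
  Nat.nth_le_nth' hkl (lt_card_toFinset_of_lt_card hl)

theorem count_nth (hk : k < #s) : Nat.count (· ∈ s) (Nat.nth (· ∈ s) k) = k :=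
  Nat.count_nth (lt_card_toFinset_of_lt_card hk)

theorem exists_nth_eq {x : ℕ} (hx : x ∈ s) : ∃ k < #s, Nat.nth (· ∈ s) k = x := by
  simpa using Nat.exists_lt_card_finite_nth_eq s.finite_toSet hx

theorem getD_sort_eq_nth : (s.sort (· ≤ ·)).getD k 0 = Nat.nth (· ∈ s) k := by
  rw [Nat.nth_eq_getD_sort (p := (· ∈ s)) s.finite_toSet, finite_toSet_toFinset]

theorem card_filter_le_eq_count_succ (x : ℕ) :
    #(s.filter (· ≤ x)) = Nat.count (· ∈ s) (x + 1) := by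
  rw [Nat.count_eq_card_filter_range]
  congr 1; ext y; simp [and_comm]

theorem card_filter_le_nth (hk : k < #s) : #(s.filter (· ≤ Nat.nth (· ∈ s) k)) = k + 1 := by
  rw [card_filter_le_eq_count_succ, Nat.count_succ, count_nth hk, if_pos (nth_mem hk)]

theorem nth_le_nth_of_subset (hts : t ⊆ s) (hk : k < #t) :
    Nat.nth (· ∈ s) k ≤ Nat.nth (· ∈ t) k := by
  have hcount : k < Nat.count (· ∈ s) (Nat.nth (· ∈ t) k + 1) := by
    calc k < Nat.count (· ∈ t) (Nat.nth (· ∈ t) k + 1) := by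
          rw [Nat.count_succ, count_nth hk, if_pos (nth_mem hk)]; omega
      _ ≤ _ := Nat.count_mono_left fun x _ hx => hts hx
  exact Nat.lt_succ_iff.mp (Nat.nth_lt_of_lt_count hcount)

theorem nth_eq_nth_of_subset (hts : t ⊆ s) (hk : k < #s)
    (hlow : ∀ x ∈ s, x ≤ Nat.nth (· ∈ s) k → x ∈ t) :
    Nat.nth (· ∈ t) k = Nat.nth (· ∈ s) k := by
  have hcount : Nat.count (· ∈ t) (Nat.nth (· ∈ s) k) = k := by
    refine le_antisymm ?_ ?_
    · exact (Nat.count_mono_left fun x _ hx => hts hx).trans (count_nth hk).le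
    · exact (count_nth hk).symm.le.trans
        (Nat.count_mono_left fun x hx hxs => hlow x hxs hx.le)
  conv_lhs => rw [← hcount]
  exact Nat.nth_count (hlow _ (nth_mem hk) le_rfl)

theorem getD_descList (hl : l < #s) :
    (descList s).getD l 0 = Nat.nth (· ∈ s) (#s - 1 - l) := by
  rw [descList, List.getD_reverse, getD_sort_eq_nth, length_sort]
  simpa [length_sort] using hl

end Finset

section Phi

variable {n : ℕ} {A B : Finset ℕ}

theorem mem_Phi {i : ℕ} : i ∈ Phi n A ↔ ∃ a ∈ A, n + 1 - a = i := mem_image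

theorem injOn_tsub_of_subset_Icc (hA : A ⊆ Icc 1 n) : Set.InjOn (n + 1 - ·) (A : Set ℕ) :=
  fun a ha b hb hab => by
    have := mem_Icc.mp (hA ha); have := mem_Icc.mp (hA hb); simp only at hab; omega

theorem card_Phi (hA : A ⊆ Icc 1 n) : #(Phi n A) = #A :=
  card_image_of_injOn (injOn_tsub_of_subset_Icc hA)

theorem Phi_Phi (hA : A ⊆ Icc 1 n) : Phi n (Phi n A) = A := by
  ext i
  simp only [mem_Phi]
  constructor
  · rintro ⟨_, ⟨a, ha, rfl⟩, rfl⟩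
    have := mem_Icc.mp (hA ha)
    rwa [show n + 1 - (n + 1 - a) = a by omega]
  · intro hi
    have := mem_Icc.mp (hA hi)
    exact ⟨n + 1 - i, ⟨i, hi, rfl⟩, by omega⟩

theorem Phi_inter (hA : A ⊆ Icc 1 n) (hB : B ⊆ Icc 1 n) :
    Phi n (A ∩ B) = Phi n A ∩ Phi n B :=
  image_inter_of_injOn A B <| by
    rw [← coe_union]; exact injOn_tsub_of_subset_Icc (union_subset hA hB)

theorem Phi_subset_Icc (hA : A ⊆ Icc 1 n) : Phi n A ⊆ Icc 1 n := by
  intro i hi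
  obtain ⟨a, ha, rfl⟩ := mem_Phi.mp hi
  have := mem_Icc.mp (hA ha)
  exact mem_Icc.mpr ⟨by omega, by omega⟩

theorem Phi_inter_Phi_self (hA : A ⊆ Icc 1 n) : Phi n (A ∩ Phi n A) = A ∩ Phi n A := by
  rw [Phi_inter hA (Phi_subset_Icc hA), Phi_Phi hA, inter_comm]

theorem descList_Phi (hA : A ⊆ Icc 1 n) :
    descList (Phi n A) = (A.sort (· ≤ ·)).map (n + 1 - ·) := by
  have hbound : ∀ a ∈ A.sort (· ≤ ·), 1 ≤ a ∧ a ≤ n :=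
    fun a ha => mem_Icc.mp (hA ((mem_sort _).mp ha))
  set L := ((A.sort (· ≤ ·)).map (n + 1 - ·)).reverse
  have hL : L.Pairwise (· < ·) := by
    rw [List.pairwise_reverse, List.pairwise_map]
    exact (sortedLT_sort A).pairwise.imp_of_mem fun ha hb hab => by
      have := hbound _ ha; have := hbound _ hb; omega
  have hPhi : Phi n A = L.toFinset := by ext; simp [L, Phi]
  rw [descList, hPhi, (List.toFinset_sort _ hL.nodup).2 (hL.imp le_of_lt),
    List.reverse_reverse]

theorem getD_descList_Phi (hA : A ⊆ Icc 1 n) {l : ℕ} (hl : l < #A) :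
    (descList (Phi n A)).getD l 0 = n + 1 - Nat.nth (· ∈ A) l := by
  rw [descList_Phi hA, List.getD_eq_getElem _ _ (by simpa using hl), List.getElem_map,
    ← getD_sort_eq_nth, List.getD_eq_getElem]

theorem nth_add_nth_eq_of_Phi_eq (hA : A ⊆ Icc 1 n) (hsymm : Phi n A = A) {l : ℕ}
    (hl : l < #A) :
    Nat.nth (· ∈ A) l + Nat.nth (· ∈ A) (#A - 1 - l) = n + 1 := by
  have h := getD_descList_Phi hA hl
  rw [hsymm, getD_descList hl] at h
  have := (mem_Icc.mp (hA (nth_mem hl))).2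
  omega

end Phi

theorem isInitSeg_iff_exists_nth {K I : Finset ℕ} :
    IsInitSeg K I ↔ ∃ k < #I, K = I.filter (· ≤ Nat.nth (· ∈ I) k) := by
  constructor
  · rintro ⟨hne, hKI, hdown⟩
    obtain ⟨k, hk, hmax⟩ := exists_nth_eq (hKI (K.max'_mem hne))
    refine ⟨k, hk, ?_⟩
    ext x
    rw [mem_filter, hmax]
    exact ⟨fun hx => ⟨hKI hx, K.le_max' x hx⟩,
      fun ⟨hx, hxle⟩ => hdown x hx _ (K.max'_mem hne) hxle⟩
  · rintro ⟨k, hk, rfl⟩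
    exact ⟨⟨_, mem_filter.mpr ⟨nth_mem hk, le_rfl⟩⟩, filter_subset _ _,
      fun i hi j hj hij => mem_filter.mpr ⟨hi, hij.trans (mem_filter.mp hj).2⟩⟩

section InitialSegments

variable {n : ℕ} {I : Finset ℕ} {k : ℕ}

local notation "d" => Nat.nth (· ∈ I)

theorem setLE_filter_le_nth_Phi_iff (hI : I ⊆ Icc 1 n) (hk : k < #I) :
    SetLE (I.filter (· ≤ d k)) (Phi n I) ↔ ∀ l ≤ k, d l + d (k - l) ≤ n + 1 := by
  have hcard := card_filter_le_nth hk
  have hseg : ∀ l ≤ k, (descList (I.filter (· ≤ d k))).getD l 0 = d (k - l) := by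
    intro l hl
    rw [getD_descList (by omega), hcard, Nat.add_sub_cancel,
      nth_eq_nth_of_subset (filter_subset _ _) (by omega)]
    exact fun x hx hxle => mem_filter.mpr ⟨hx, hxle.trans (nth_le_nth (by omega) hk)⟩
  have hbound : ∀ l ≤ k, d l ≤ n := fun l hl => (mem_Icc.mp (hI (nth_mem (by omega)))).2
  simp only [SetLE, hcard, card_Phi hI]
  constructor
  · rintro ⟨-, h⟩ l hl
    have := h l (by omega)
    rw [hseg l hl, getD_descList_Phi hI (by omega)] at this
    have := hbound l hl
    omega
  · refine fun h => ⟨hk, fun l hl => ?_⟩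
    rw [hseg l (by omega), getD_descList_Phi hI (by omega)]
    have := h l (by omega)
    omega

theorem pairSum_le_of_lt_card_inter_Phi (hI : I ⊆ Icc 1 n) (hk : k < #(I ∩ Phi n I)) {l : ℕ}
    (hl : l ≤ k) : d l + d (k - l) ≤ n + 1 := by
  set P := I ∩ Phi n I
  have hPI : P ⊆ I := inter_subset_left
  have hPI_card : #P ≤ #I := card_le_card hPI
  calc d l + d (k - l)
      ≤ Nat.nth (· ∈ P) l + Nat.nth (· ∈ P) (#P - 1 - l) :=
        add_le_add (nth_le_nth_of_subset hPI (by omega))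
          ((nth_le_nth (by omega) (by omega)).trans (nth_le_nth_of_subset hPI (by omega)))
    _ = n + 1 := nth_add_nth_eq_of_Phi_eq (hPI.trans hI) (Phi_inter_Phi_self hI) (by omega)

theorem mem_Phi_of_two_mul_le (hcond : ∀ i ∈ I, i ∉ Phi n I → n + 1 ≤ 2 * i) {i : ℕ}
    (hi : i ∈ I) (h2 : 2 * i ≤ n + 1) : i ∈ Phi n I := by
  by_contra h
  have := hcond i hi h
  exact h (mem_Phi.mpr ⟨i, hi, by omega⟩)

theorem nth_inter_Phi_eq (hcond : ∀ i ∈ I, i ∉ Phi n I → n + 1 ≤ 2 * i) (hk : k < #I)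
    (h2 : 2 * d k ≤ n + 1) :
    k < #(I ∩ Phi n I) ∧ Nat.nth (· ∈ I ∩ Phi n I) k = d k := by
  have hlow : ∀ x ∈ I, x ≤ d k → x ∈ I ∩ Phi n I := fun x hx hxle =>
    mem_inter.mpr ⟨hx, mem_Phi_of_two_mul_le hcond hx (by omega)⟩
  refine ⟨?_, nth_eq_nth_of_subset inter_subset_left hk hlow⟩
  calc k < #(I.filter (· ≤ d k)) := by rw [card_filter_le_nth hk]; omega
    _ ≤ #(I ∩ Phi n I) :=
      card_le_card fun x hx => hlow x (mem_filter.mp hx).1 (mem_filter.mp hx).2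

theorem not_pairSum_le_of_card_inter_Phi_le
    (hcond : ∀ i ∈ I, i ∉ Phi n I → n + 1 ≤ 2 * i) (hI : I ⊆ Icc 1 n) (hPk : #(I ∩ Phi n I) ≤ k)
    (hk : k < #I) : ¬ ∀ l ≤ k, d l + d (k - l) ≤ n + 1 := by
  set P := I ∩ Phi n I
  have hP : P ⊆ Icc 1 n := inter_subset_left.trans hI
  have hsymm : Phi n P = P := Phi_inter_Phi_self hI
  intro h
  have hs : ∀ l ≤ #P, d l + d (#P - l) ≤ n + 1 := fun l hl =>
    (Nat.add_le_add_left (nth_le_nth (show #P - l ≤ k - l by omega) (by omega)) _).trans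
      (h l (by omega))
  obtain ⟨t, hst | hst⟩ := Nat.even_or_odd' #P
  · have h2 : 2 * d t ≤ n + 1 := by
      have := hs t (by omega)
      rw [show #P - t = t by omega] at this
      omega
    obtain ⟨htP, hpt⟩ : t < #P ∧ Nat.nth (· ∈ P) t = d t :=
      nth_inter_Phi_eq hcond (by omega) h2
    have hpair := nth_add_nth_eq_of_Phi_eq hP hsymm (show t - 1 < #P by omega)
    rw [show #P - 1 - (t - 1) = t by omega] at hpair
    have := nth_lt_nth (s := P) (show t - 1 < t by omega) htP
    omega
  · have hsum := hs t (by omega)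
    rw [show #P - t = t + 1 by omega] at hsum
    have hlt := nth_lt_nth (s := I) (show t < t + 1 by omega) (by omega)
    obtain ⟨htP, hpt⟩ : t < #P ∧ Nat.nth (· ∈ P) t = d t :=
      nth_inter_Phi_eq hcond (by omega) (by omega)
    have hpair := nth_add_nth_eq_of_Phi_eq hP hsymm htP
    rw [show #P - 1 - t = t by omega] at hpair
    omega

theorem pairSum_le_iff_lt_card_inter_Phi (hcond : ∀ i ∈ I, i ∉ Phi n I → n + 1 ≤ 2 * i)
    (hI : I ⊆ Icc 1 n) (hk : k < #I) :
    (∀ l ≤ k, d l + d (k - l) ≤ n + 1) ↔ k < #(I ∩ Phi n I) := by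
  refine ⟨fun h => ?_, fun h l hl => pairSum_le_of_lt_card_inter_Phi hI h hl⟩
  by_contra! hPk
  exact not_pairSum_le_of_card_inter_Phi_le hcond hI hPk hk h

end InitialSegments

theorem stmt9_general (n : ℕ) (I₀ : Finset ℕ) (hI : I₀ ⊆ Finset.Icc 1 n)
    (hcond : ∀ i ∈ I₀, i ∉ Phi n I₀ → n + 1 ≤ 2 * i) :
    {K : Finset ℕ | IsInitSeg K I₀ ∧ SetLE K (Phi n I₀)}.ncard =
      (I₀ ∩ Phi n I₀).card := by
  set seg : ℕ → Finset ℕ := fun k => I₀.filter (· ≤ Nat.nth (· ∈ I₀) k)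
  have hPI : #(I₀ ∩ Phi n I₀) ≤ #I₀ := card_le_card inter_subset_left
  have hsetLE : ∀ k < #I₀, SetLE (seg k) (Phi n I₀) ↔ k < #(I₀ ∩ Phi n I₀) := fun k hk =>
    (setLE_filter_le_nth_Phi_iff hI hk).trans (pairSum_le_iff_lt_card_inter_Phi hcond hI hk)
  have hset :
      {K | IsInitSeg K I₀ ∧ SetLE K (Phi n I₀)} = (range #(I₀ ∩ Phi n I₀)).image seg := by
    ext K
    simp only [isInitSeg_iff_exists_nth, Set.mem_ofPred_eq, coe_image, Set.mem_image, mem_coe,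
      mem_range]
    constructor
    · rintro ⟨⟨k, hk, rfl⟩, hle⟩
      exact ⟨k, (hsetLE k hk).1 hle, rfl⟩
    · rintro ⟨k, hk, rfl⟩
      exact ⟨⟨k, by omega, rfl⟩, (hsetLE k (by omega)).2 hk⟩
  rw [hset, Set.ncard_coe_finset, card_image_of_injOn, card_range]
  intro a ha b hb hab
  have := congrArg card hab
  simp only [mem_coe, mem_range, seg] at ha hb this
  rwa [card_filter_le_nth (by omega), card_filter_le_nth (by omega), add_left_inj] at this

/-- if `I₀ ⊆ [n]` satisfies that every `i ∈ I₀ \ Φ(I₀)` has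
`2i ≥ n+1`, and `J₀ = Φ(I₀)`, then the number of nonempty initial segments `K`
of `I₀` with `K ≤ J₀` equals `|I₀ ∩ J₀|`. -/
theorem stmt9 (n : ℕ) (hn : 1 ≤ n) (I₀ : Finset ℕ) (hI : I₀ ⊆ Finset.Icc 1 n)
    (hcond : ∀ i ∈ I₀, i ∉ Phi n I₀ → n + 1 ≤ 2 * i) :
    {K : Finset ℕ | IsInitSeg K I₀ ∧ SetLE K (Phi n I₀)}.ncard =
      (I₀ ∩ Phi n I₀).card :=
  stmt9_general n I₀ hI hcond
end

section
/- In the algorithm associated to a symmetric dimension vector d of positive integers: (i) every vector d^k has nonnegative entries and is symmetric (d^k_i = d^k_{n+1−i} for all i); (ii) for every k ≥ 1 each entry of e^k lies in {0,1,2}; (iii) d^k = 0 for all k ≥ max_i d_i; and (iv) if m is such that d^m = 0, then d = e^0 + e^1 + … + e^m (coordinatewise sum). -/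
/-- One step of the `f`-vector of the algorithm. -/
def fstep (n : ℕ) (v : ℕ → ℤ) : ℕ → ℤ := fun i =>
  if 2 ≤ v i ∨ (v i = 1 ∧ 2 * i < n + 1) then 1 else 0

/-- One step of the `g`-vector of the algorithm. -/
def gstep (n : ℕ) (v : ℕ → ℤ) : ℕ → ℤ := fun i =>
  if 2 ≤ v i ∨ (v i = 1 ∧ n + 1 < 2 * i) then 1 else 0

/-- `e = f + g`. -/
def estep (n : ℕ) (v : ℕ → ℤ) : ℕ → ℤ := fun i => fstep n v i + gstep n v i

/-- `e⁰ = (1,…,1)` if `N = Σ dᵢ` is odd, `(0,…,0)` if `N` is even. -/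
def evec0 (n : ℕ) (d : ℕ → ℤ) : ℕ → ℤ :=
  fun _ => if Odd (∑ i ∈ Finset.Icc 1 n, d i) then 1 else 0

/-- The vectors `d^k` of the algorithm. -/
def dvec (n : ℕ) (d : ℕ → ℤ) : ℕ → ℕ → ℤ
  | 0 => fun i => d i - evec0 n d i
  | k + 1 => fun i => dvec n d k i - estep n (dvec n d k) i

/-- The vectors `e^k` of the algorithm (`e^{k+1} = f^{k+1} + g^{k+1}`). -/
def evec (n : ℕ) (d : ℕ → ℤ) : ℕ → ℕ → ℤ
  | 0 => evec0 n d
  | k + 1 => estep n (dvec n d k)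

/-- The support `I₀^k` of `f^k` (for `k ≥ 1`). -/
def Iset (n : ℕ) (d : ℕ → ℤ) (k : ℕ) : Finset ℕ :=
  (Finset.Icc 1 n).filter (fun i => fstep n (dvec n d (k - 1)) i ≠ 0)

/-- The support `J₀^k` of `g^k` (for `k ≥ 1`). -/
def Jset (n : ℕ) (d : ℕ → ℤ) (k : ℕ) : Finset ℕ :=
  (Finset.Icc 1 n).filter (fun i => gstep n (dvec n d (k - 1)) i ≠ 0)

/-!
The entry `e^{k+1}_i` is `2` when `d^k_i ≥ 2`, `0` when `d^k_i = 0`, and `1` when `d^k_i = 1`,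
except at the central index `2i = n + 1`, where it is `0`. Subtracting it therefore keeps `d^k`
nonnegative, symmetric (`f` and `g` are mirror images) and keeps even entries even. The central
entry of `d⁰` is even, since `N ≡ d_c (mod 2)` and `e⁰` removes the parity of `N`; so no entry
ever gets stuck at `1`, every positive entry drops by at least one per step, and `d^k = 0` once
`k ≥ max dᵢ`. Part (iv) is the telescoping identity `d^m = d - (e⁰ + ⋯ + e^m)`.
-/

open Finset

lemma dvec_eq_sub_sum_evec (n : ℕ) (d : ℕ → ℤ) (k i : ℕ) :
    dvec n d k i = d i - ∑ j ∈ range (k + 1), evec n d j i := by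
  induction k with
  | zero => simp [dvec, evec]
  | succ k ih =>
    rw [sum_range_succ, ← sub_sub, ← ih]
    rfl

variable {n : ℕ}

lemma estep_mem (v : ℕ → ℤ) (i : ℕ) : estep n v i ∈ ({0, 1, 2} : Set ℤ) := by
  simp only [estep, fstep, gstep, Set.mem_insert_iff, Set.mem_singleton_iff]
  split_ifs <;> norm_num

lemma estep_eq_zero_of_eq_zero {v : ℕ → ℤ} {i : ℕ} (hv : v i = 0) : estep n v i = 0 := by
  simp [estep, fstep, gstep, hv]

lemma estep_le_self {v : ℕ → ℤ} {i : ℕ} (h0 : 0 ≤ v i) : estep n v i ≤ v i := by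
  simp only [estep, fstep, gstep]
  split_ifs <;> omega

lemma one_le_estep {v : ℕ → ℤ} {i : ℕ} (hpos : 1 ≤ v i) (hc : 2 * i = n + 1 → Even (v i)) :
    1 ≤ estep n v i := by
  rw [Int.even_iff] at hc
  simp only [estep, fstep, gstep]
  split_ifs <;> omega

lemma even_sub_estep {v : ℕ → ℤ} {i : ℕ} (hv : Even (v i)) :
    Even (v i - estep n v i) := by
  rw [Int.even_iff] at hv ⊢
  simp only [estep, fstep, gstep]
  split_ifs <;> omega

lemma estep_reflect {v : ℕ → ℤ} {i : ℕ} (hi : i ∈ Icc 1 n) (hv : v (n + 1 - i) = v i) :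
    estep n v (n + 1 - i) = estep n v i := by
  rw [mem_Icc] at hi
  have hf : 2 * (n + 1 - i) < n + 1 ↔ n + 1 < 2 * i := by omega
  have hg : n + 1 < 2 * (n + 1 - i) ↔ 2 * i < n + 1 := by omega
  simp only [estep, fstep, gstep, hv, hf, hg]
  exact add_comm _ _

structure Admissible (n : ℕ) (v : ℕ → ℤ) : Prop where
  nonneg : ∀ i ∈ Icc 1 n, 0 ≤ v i
  reflect : ∀ i ∈ Icc 1 n, v (n + 1 - i) = v i
  even_center : ∀ i ∈ Icc 1 n, 2 * i = n + 1 → Even (v i)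

lemma Admissible.sub_estep {v : ℕ → ℤ} (hv : Admissible n v) :
    Admissible n (fun i => v i - estep n v i) where
  nonneg i hi := sub_nonneg.2 (estep_le_self (hv.nonneg i hi))
  reflect i hi := by rw [hv.reflect i hi, estep_reflect hi (hv.reflect i hi)]
  even_center i hi hc := even_sub_estep (hv.even_center i hi hc)

lemma even_sum_Icc_iff_of_reflect {d : ℕ → ℤ} (hsym : ∀ i ∈ Icc 1 n, d i = d (n + 1 - i))
    {c : ℕ} (hc : c ∈ Icc 1 n) (hcn : 2 * c = n + 1) :
    Even (∑ i ∈ Icc 1 n, d i) ↔ Even (d c) := by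
  simp only [← ZMod.intCast_eq_zero_iff_even]
  -- modulo 2 the off-centre entries cancel in pairs `i ↔ n + 1 - i`
  have hpairs : ∑ i ∈ (Icc 1 n).erase c, (d i : ZMod 2) = 0 := by
    refine sum_involution (fun i _ => n + 1 - i) ?_ ?_ ?_ ?_ <;>
      simp only [mem_erase, mem_Icc] <;> intro i hi
    · rw [← hsym i (mem_Icc.2 hi.2)]
      exact CharTwo.add_self_eq_zero _
    · omega
    · omega
    · omega
  rw [Int.cast_sum, ← add_sum_erase _ _ hc, hpairs, add_zero]

lemma admissible_dvec {d : ℕ → ℤ} (hd : ∀ i ∈ Icc 1 n, 0 < d i)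
    (hsym : ∀ i ∈ Icc 1 n, d i = d (n + 1 - i)) (k : ℕ) : Admissible n (dvec n d k) := by
  induction k with
  | zero =>
    refine ⟨fun i hi => ?_, fun i hi => ?_, fun i hi hc => ?_⟩
    · have := hd i hi
      simp only [dvec, evec0]
      split_ifs <;> omega
    · simp only [dvec, evec0, ← hsym i hi]
    · have hpar := even_sum_Icc_iff_of_reflect hsym hi hc
      simp only [dvec, evec0]
      split_ifs with hodd
      · exact Int.even_sub_one.2 (fun he => Int.not_even_iff_odd.2 hodd (hpar.2 he))
      · simpa using hpar.1 (Int.not_odd_iff_even.1 hodd)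
  | succ k ih => exact ih.sub_estep

lemma dvec_eq_zero_or_le {d : ℕ → ℤ} (hadm : ∀ k, Admissible n (dvec n d k))
    {i : ℕ} (hi : i ∈ Icc 1 n) (k : ℕ) : dvec n d k i = 0 ∨ dvec n d k i ≤ d i - k := by
  induction k with
  | zero =>
    right
    simp only [dvec, evec0]
    split_ifs <;> omega
  | succ k ih =>
    have h0 := (hadm k).nonneg i hi
    change dvec n d k i - estep n (dvec n d k) i = 0 ∨
      dvec n d k i - estep n (dvec n d k) i ≤ d i - (k + 1 : ℕ)
    rcases eq_or_lt_of_le h0 with hz | hpos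
    · left
      rw [← hz, estep_eq_zero_of_eq_zero hz.symm, sub_zero]
    · have := one_le_estep hpos ((hadm k).even_center i hi)
      push_cast
      omega

theorem stmt11_general (n : ℕ) (d : ℕ → ℤ)
    (hd : ∀ i ∈ Finset.Icc 1 n, 0 < d i)
    (hsym : ∀ i ∈ Finset.Icc 1 n, d i = d (n + 1 - i)) :
    (∀ k, ∀ i ∈ Finset.Icc 1 n,
      0 ≤ dvec n d k i ∧ dvec n d k i = dvec n d k (n + 1 - i)) ∧
    (∀ k, 1 ≤ k → ∀ i ∈ Finset.Icc 1 n,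
      evec n d k i ∈ ({0, 1, 2} : Set ℤ)) ∧
    (∀ k : ℕ, (∀ i ∈ Finset.Icc 1 n, d i ≤ (k : ℤ)) →
      ∀ i ∈ Finset.Icc 1 n, dvec n d k i = 0) ∧
    (∀ m : ℕ, (∀ i ∈ Finset.Icc 1 n, dvec n d m i = 0) →
      ∀ i ∈ Finset.Icc 1 n, d i = ∑ j ∈ Finset.range (m + 1), evec n d j i) := by
  have hadm := admissible_dvec hd hsym
  refine ⟨fun k i hi => ⟨(hadm k).nonneg i hi, ((hadm k).reflect i hi).symm⟩, ?_, ?_, ?_⟩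
  · rintro (_ | k) hk i -
    · omega
    · exact estep_mem _ i
  · intro k hk i hi
    have := (hadm k).nonneg i hi
    have := hk i hi
    rcases dvec_eq_zero_or_le hadm hi k with h | h <;> omega
  · intro m hm i hi
    linarith [dvec_eq_sub_sum_evec n d m i, hm i hi]

/-- for the algorithm associated to a symmetric dimension vector `d`
of positive integers: (i) every `d^k` has nonnegative, symmetric entries;
(ii) for `k ≥ 1` each entry of `e^k` lies in `{0,1,2}`; (iii) `d^k = 0` for all
`k ≥ max_i d_i`; (iv) if `d^m = 0` then `d = e^0 + e^1 + … + e^m` coordinatewise. -/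
theorem stmt11 (n : ℕ) (hn : 1 ≤ n) (d : ℕ → ℤ)
    (hd : ∀ i ∈ Finset.Icc 1 n, 0 < d i)
    (hsym : ∀ i ∈ Finset.Icc 1 n, d i = d (n + 1 - i)) :
    (∀ k, ∀ i ∈ Finset.Icc 1 n,
      0 ≤ dvec n d k i ∧ dvec n d k i = dvec n d k (n + 1 - i)) ∧
    (∀ k, 1 ≤ k → ∀ i ∈ Finset.Icc 1 n,
      evec n d k i ∈ ({0, 1, 2} : Set ℤ)) ∧
    (∀ k : ℕ, (∀ i ∈ Finset.Icc 1 n, d i ≤ (k : ℤ)) →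
      ∀ i ∈ Finset.Icc 1 n, dvec n d k i = 0) ∧
    (∀ m : ℕ, (∀ i ∈ Finset.Icc 1 n, dvec n d m i = 0) →
      ∀ i ∈ Finset.Icc 1 n, d i = ∑ j ∈ Finset.range (m + 1), evec n d j i) :=
  stmt11_general n d hd hsym
end

section
/- In the algorithm associated to a symmetric dimension vector d of positive integers, the supports satisfy I_0^{k+1} ⊆ I_0^k and J_0^{k+1} ⊆ J_0^k for all k ≥ 1, and the support {i : d^0_i ≠ 0} of d^0 is equal to I_0^1 ∪ J_0^1. -/
open Finset

section Supports

variable {n : ℕ} {v : ℕ → ℤ} {i : ℕ}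

lemma fstep_ne_zero_iff : fstep n v i ≠ 0 ↔ 2 ≤ v i ∨ (v i = 1 ∧ 2 * i < n + 1) := by
  unfold fstep; split_ifs with h
  exacts [iff_of_true one_ne_zero h, iff_of_false (not_not.2 rfl) h]

lemma gstep_ne_zero_iff : gstep n v i ≠ 0 ↔ 2 ≤ v i ∨ (v i = 1 ∧ n + 1 < 2 * i) := by
  unfold gstep; split_ifs with h
  exacts [iff_of_true one_ne_zero h, iff_of_false (not_not.2 rfl) h]

lemma fstep_ne_zero_of_fstep_sub_estep_ne_zero (h : fstep n (v - estep n v) i ≠ 0) :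
    fstep n v i ≠ 0 := by
  simp only [Pi.sub_apply, estep, fstep, gstep] at h ⊢
  split_ifs at h <;> omega

lemma gstep_ne_zero_of_gstep_sub_estep_ne_zero (h : gstep n (v - estep n v) i ≠ 0) :
    gstep n v i ≠ 0 := by
  simp only [Pi.sub_apply, estep, fstep, gstep] at h ⊢
  split_ifs at h <;> omega

lemma ne_zero_iff_fstep_ne_zero_or_gstep_ne_zero (hnonneg : 0 ≤ v i)
    (hmid : 2 * i = n + 1 → Even (v i)) :
    v i ≠ 0 ↔ fstep n v i ≠ 0 ∨ gstep n v i ≠ 0 := by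
  rw [fstep_ne_zero_iff, gstep_ne_zero_iff]
  by_cases hi : 2 * i = n + 1
  · obtain ⟨r, hr⟩ := hmid hi
    omega
  · omega

end Supports

lemma intCast_sum_Icc_zmod_two_eq_middle {n i : ℕ} {d : ℕ → ℤ}
    (hsym : ∀ j ∈ Icc 1 n, d j = d (n + 1 - j)) (hi : 2 * i = n + 1) :
    ((∑ j ∈ Icc 1 n, d j : ℤ) : ZMod 2) = d i := by
  have hmem : i ∈ Icc 1 n := mem_Icc.2 ⟨by omega, by omega⟩
  push_cast
  rw [← sum_erase_add _ _ hmem, add_eq_right]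
  refine sum_involution (fun j _ => n + 1 - j) (fun j hj => ?_) (fun j hj _ => ?_)
    (fun j hj => ?_) (fun j hj => ?_)
  · rw [← hsym j (mem_of_mem_erase hj)]
    exact CharTwo.add_self_eq_zero _
  all_goals simp only [mem_erase, mem_Icc] at hj ⊢; omega

lemma even_dvec_zero {n i : ℕ} {d : ℕ → ℤ} (hsym : ∀ j ∈ Icc 1 n, d j = d (n + 1 - j))
    (hi : 2 * i = n + 1) : Even (dvec n d 0 i) := by
  have hodd : Odd (∑ j ∈ Icc 1 n, d j) ↔ Odd (d i) := by
    rw [← ZMod.intCast_eq_one_iff_odd, ← ZMod.intCast_eq_one_iff_odd,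
      intCast_sum_Icc_zmod_two_eq_middle hsym hi]
  change Even (d i - if Odd (∑ j ∈ Icc 1 n, d j) then 1 else 0)
  split_ifs with h <;> rw [hodd] at h
  · exact h.sub_odd odd_one
  · simpa using Int.not_odd_iff_even.mp h

lemma dvec_zero_nonneg {n i : ℕ} {d : ℕ → ℤ} (hdi : 0 < d i) : 0 ≤ dvec n d 0 i := by
  change 0 ≤ d i - if Odd (∑ j ∈ Icc 1 n, d j) then 1 else 0
  split_ifs <;> omega

lemma Iset_succ_subset (n : ℕ) (d : ℕ → ℤ) {k : ℕ} (hk : 1 ≤ k) :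
    Iset n d (k + 1) ⊆ Iset n d k := by
  obtain ⟨m, rfl⟩ := Nat.exists_eq_add_of_le' hk
  exact monotone_filter_right _ fun i _ => fstep_ne_zero_of_fstep_sub_estep_ne_zero

lemma Jset_succ_subset (n : ℕ) (d : ℕ → ℤ) {k : ℕ} (hk : 1 ≤ k) :
    Jset n d (k + 1) ⊆ Jset n d k := by
  obtain ⟨m, rfl⟩ := Nat.exists_eq_add_of_le' hk
  exact monotone_filter_right _ fun i _ => gstep_ne_zero_of_gstep_sub_estep_ne_zero

lemma filter_dvec_zero_ne_zero_eq_Iset_union_Jset {n : ℕ} {d : ℕ → ℤ}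
    (hd : ∀ i ∈ Icc 1 n, 0 < d i) (hsym : ∀ i ∈ Icc 1 n, d i = d (n + 1 - i)) :
    (Icc 1 n).filter (fun i => dvec n d 0 i ≠ 0) = Iset n d 1 ∪ Jset n d 1 := by
  rw [Iset, Jset, ← filter_or]
  exact filter_congr fun i hi => ne_zero_iff_fstep_ne_zero_or_gstep_ne_zero
    (dvec_zero_nonneg (hd i hi)) (even_dvec_zero hsym)

theorem stmt12_general (n : ℕ) (d : ℕ → ℤ)
    (hd : ∀ i ∈ Finset.Icc 1 n, 0 < d i)
    (hsym : ∀ i ∈ Finset.Icc 1 n, d i = d (n + 1 - i)) :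
    (∀ k, 1 ≤ k → Iset n d (k + 1) ⊆ Iset n d k ∧ Jset n d (k + 1) ⊆ Jset n d k) ∧
    (Finset.Icc 1 n).filter (fun i => dvec n d 0 i ≠ 0) = Iset n d 1 ∪ Jset n d 1 :=
  ⟨fun _ hk => ⟨Iset_succ_subset n d hk, Jset_succ_subset n d hk⟩,
    filter_dvec_zero_ne_zero_eq_Iset_union_Jset hd hsym⟩

/-- for the algorithm associated to a symmetric dimension vector `d`
of positive integers, the supports satisfy `I₀^{k+1} ⊆ I₀^k` and `J₀^{k+1} ⊆ J₀^k`
for all `k ≥ 1`, and the support of `d^0` equals `I₀^1 ∪ J₀^1`. -/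
theorem stmt12 (n : ℕ) (hn : 1 ≤ n) (d : ℕ → ℤ)
    (hd : ∀ i ∈ Finset.Icc 1 n, 0 < d i)
    (hsym : ∀ i ∈ Finset.Icc 1 n, d i = d (n + 1 - i)) :
    (∀ k, 1 ≤ k → Iset n d (k + 1) ⊆ Iset n d k ∧ Jset n d (k + 1) ⊆ Jset n d k) ∧
    (Finset.Icc 1 n).filter (fun i => dvec n d 0 i ≠ 0) = Iset n d 1 ∪ Jset n d 1 :=
  stmt12_general n d hd hsym
end

section
/- In the algorithm associated to a symmetric dimension vector d of positive integers, one has I_0^k ⊆ J_0^{k−1} and J_0^k ⊆ I_0^{k−1} for every k ≥ 2. -/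
/-!
A coordinate `i` can be selected by `f` (or `g`) at step `k + 1` only if `g` and `f` both
fired at `i` at step `k`. If `vᵢ ≥ 2`, both fired. If `vᵢ = 1`, then either exactly one of
`f`, `g` fires and `vᵢ` drops to `0`, or `i` is the middle index `2i = n + 1`, where the
value stays `1` but neither vector can ever fire. If `vᵢ ≤ 0`, nothing fires and nothing changes.
-/

lemma gstep_ne_zero_of_fstep_sub_estep_ne_zero (n : ℕ) (v : ℕ → ℤ) (i : ℕ)
    (h : fstep n (fun j => v j - estep n v j) i ≠ 0) : gstep n v i ≠ 0 := by
  simp only [fstep, gstep, estep] at h ⊢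
  split_ifs at h ⊢ <;> omega

lemma fstep_ne_zero_of_gstep_sub_estep_ne_zero (n : ℕ) (v : ℕ → ℤ) (i : ℕ)
    (h : gstep n (fun j => v j - estep n v j) i ≠ 0) : fstep n v i ≠ 0 := by
  simp only [fstep, gstep, estep] at h ⊢
  split_ifs at h ⊢ <;> omega

lemma Iset_add_two_subset_Jset (n : ℕ) (d : ℕ → ℤ) (m : ℕ) :
    Iset n d (m + 2) ⊆ Jset n d (m + 1) :=
  Finset.monotone_filter_right _ fun i _ =>
    gstep_ne_zero_of_fstep_sub_estep_ne_zero n (dvec n d m) i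

lemma Jset_add_two_subset_Iset (n : ℕ) (d : ℕ → ℤ) (m : ℕ) :
    Jset n d (m + 2) ⊆ Iset n d (m + 1) :=
  Finset.monotone_filter_right _ fun i _ =>
    fstep_ne_zero_of_gstep_sub_estep_ne_zero n (dvec n d m) i

theorem stmt13_general (n : ℕ) (d : ℕ → ℤ) :
    ∀ k, 2 ≤ k → Iset n d k ⊆ Jset n d (k - 1) ∧ Jset n d k ⊆ Iset n d (k - 1) := by
  intro k hk
  obtain ⟨m, rfl⟩ : ∃ m, k = m + 2 := ⟨k - 2, by omega⟩
  exact ⟨Iset_add_two_subset_Jset n d m, Jset_add_two_subset_Iset n d m⟩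

/-- for the algorithm associated to a symmetric dimension vector `d`
of positive integers, `I₀^k ⊆ J₀^{k-1}` and `J₀^k ⊆ I₀^{k-1}` for every `k ≥ 2`. -/
theorem stmt13 (n : ℕ) (hn : 1 ≤ n) (d : ℕ → ℤ)
    (hd : ∀ i ∈ Finset.Icc 1 n, 0 < d i)
    (hsym : ∀ i ∈ Finset.Icc 1 n, d i = d (n + 1 - i)) :
    ∀ k, 2 ≤ k → Iset n d k ⊆ Jset n d (k - 1) ∧ Jset n d k ⊆ Iset n d (k - 1) :=
  stmt13_general n d
end
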